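/- Let 0 ≤ ε < 1 and let Q ⊆ P be finite nonempty sets in ℝ². If Q is an ε-kernel of P, then every point p ∈ P satisfies dist(p, conv(Q)) ≤ ε·diam(P), where conv(Q) is the convex hull of Q and dist denotes Euclidean distance from a point to a set. -/

import Mathlib

open Real RealInnerProductSpace

/-- The directional width of a finite nonempty point set `P` in direction `u`:
`max_{p ∈ P} ⟪u, p⟫ - min_{p ∈ P} ⟪u, p⟫`. -/
noncomputable def dirWidth (P : Finset (EuclideanSpace ℝ (Fin 2))) (hP : P.Nonempty)
    (u : EuclideanSpace ℝ (Fin 2)) : ℝ :=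
  P.sup' hP (fun p => ⟪u, p⟫) - P.inf' hP (fun p => ⟪u, p⟫)

/-- The diameter of a finite nonempty point set: `max_{p, q ∈ P} ‖p - q‖`. -/
noncomputable def fdiam (P : Finset (EuclideanSpace ℝ (Fin 2))) (hP : P.Nonempty) : ℝ :=
  (P ×ˢ P).sup' (hP.product hP) (fun pq => dist pq.1 pq.2)

/-- `Q` is an `ε`-kernel of `P`: for every unit direction `u`,
`(1 - ε) * w(u, P) ≤ w(u, Q)`. -/
def IsKernel (ε : ℝ) (P Q : Finset (EuclideanSpace ℝ (Fin 2)))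
    (hP : P.Nonempty) (hQ : Q.Nonempty) : Prop :=
  ∀ u : EuclideanSpace ℝ (Fin 2), ‖u‖ = 1 → (1 - ε) * dirWidth P hP u ≤ dirWidth Q hQ u

/-!
Let `q` be the point of `conv Q` nearest to `p`, at distance `d > 0`, and `u` the unit vector
from `q` towards `p`. The obtuse-angle characterisation of nearest points puts all of `conv Q` in
the half-plane `⟪u, ·⟫ ≤ ⟪u, p⟫ - d`, so `w(u, Q) ≤ w(u, P) - d`. Together with
`(1 - ε) w(u, P) ≤ w(u, Q)` this gives `d ≤ ε w(u, P) ≤ ε diam P`.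
-/

section Separation

variable {E : Type*} [NormedAddCommGroup E] [InnerProductSpace ℝ E] {K : Set E}

theorem exists_infDist_eq_norm_inner_sub_nonpos (hK : IsComplete K) (hconv : Convex ℝ K)
    (hne : K.Nonempty) (p : E) :
    ∃ q ∈ K, Metric.infDist p K = ‖p - q‖ ∧ ∀ w ∈ K, ⟪p - q, w - q⟫ ≤ 0 := by
  obtain ⟨q, hq, hmin⟩ := exists_norm_eq_iInf_of_complete_convex hne hK hconv p
  refine ⟨q, hq, ?_, (norm_eq_iInf_iff_real_inner_le_zero hconv hq).1 hmin⟩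
  simp only [hmin, Metric.infDist_eq_iInf, dist_eq_norm]

theorem exists_unit_inner_le_sub_infDist (hK : IsComplete K) (hconv : Convex ℝ K) {p : E}
    (hpos : 0 < Metric.infDist p K) :
    ∃ u : E, ‖u‖ = 1 ∧ ∀ x ∈ K, ⟪u, x⟫ ≤ ⟪u, p⟫ - Metric.infDist p K := by
  have hne : K.Nonempty := Set.nonempty_iff_ne_empty.2 fun h => by simp [h] at hpos
  obtain ⟨q, -, hd, hobtuse⟩ := exists_infDist_eq_norm_inner_sub_nonpos hK hconv hne p
  set d := Metric.infDist p K
  refine ⟨d⁻¹ • (p - q), ?_, fun x hx => ?_⟩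
  · rw [norm_smul, norm_inv, Real.norm_of_nonneg hpos.le, ← hd, inv_mul_cancel₀ hpos.ne']
  · have hx' : ⟪p - q, x⟫ ≤ ⟪p - q, p⟫ - d ^ 2 := by
      have := hobtuse x hx
      rw [hd, ← real_inner_self_eq_norm_sq]
      simp only [inner_sub_right, inner_sub_left] at this ⊢
      linarith
    rw [real_inner_smul_left, real_inner_smul_left]
    calc d⁻¹ * ⟪p - q, x⟫ ≤ d⁻¹ * (⟪p - q, p⟫ - d ^ 2) := by gcongr
      _ = d⁻¹ * ⟪p - q, p⟫ - d := by field_simp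

end Separation

section Widths

variable {P Q : Finset (EuclideanSpace ℝ (Fin 2))} (hP : P.Nonempty) (hQ : Q.Nonempty)

theorem dist_le_fdiam {p q : EuclideanSpace ℝ (Fin 2)} (hp : p ∈ P) (hq : q ∈ P) :
    dist p q ≤ fdiam P hP :=
  Finset.le_sup' (fun pq => dist pq.1 pq.2) (b := (p, q)) (Finset.mem_product.2 ⟨hp, hq⟩)

theorem fdiam_nonneg : 0 ≤ fdiam P hP := by
  obtain ⟨p, hp⟩ := hP
  simpa using dist_le_fdiam ⟨p, hp⟩ hp hp

theorem dirWidth_le_norm_mul_fdiam (u : EuclideanSpace ℝ (Fin 2)) :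
    dirWidth P hP u ≤ ‖u‖ * fdiam P hP := by
  obtain ⟨p, hp, hsup⟩ := Finset.exists_mem_eq_sup' hP (fun x => ⟪u, x⟫)
  obtain ⟨q, hq, hinf⟩ := Finset.exists_mem_eq_inf' hP (fun x => ⟪u, x⟫)
  calc dirWidth P hP u = ⟪u, p - q⟫ := by rw [dirWidth, hsup, hinf, inner_sub_right]
    _ ≤ ‖u‖ * dist p q := by rw [dist_eq_norm]; exact real_inner_le_norm u (p - q)
    _ ≤ ‖u‖ * fdiam P hP := by gcongr; exact dist_le_fdiam hP hp hq

theorem dirWidth_le_sub_of_subset {u p : EuclideanSpace ℝ (Fin 2)} {d : ℝ} (hQP : Q ⊆ P)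
    (hp : p ∈ P) (hQ_le : ∀ q ∈ Q, ⟪u, q⟫ ≤ ⟪u, p⟫ - d) :
    dirWidth Q hQ u ≤ dirWidth P hP u - d := by
  have hsup : Q.sup' hQ (fun x => ⟪u, x⟫) ≤ ⟪u, p⟫ - d := Finset.sup'_le _ _ hQ_le
  have hp_le : ⟪u, p⟫ ≤ P.sup' hP (fun x => ⟪u, x⟫) := Finset.le_sup' (fun x => ⟪u, x⟫) hp
  have hinf : P.inf' hP (fun x => ⟪u, x⟫) ≤ Q.inf' hQ (fun x => ⟪u, x⟫) :=
    Finset.le_inf' _ _ fun q hq => Finset.inf'_le _ (hQP hq)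
  rw [dirWidth, dirWidth]
  linarith

end Widths

theorem kernel_is_hull_general
    (ε : ℝ) (hε0 : 0 ≤ ε)
    (P Q : Finset (EuclideanSpace ℝ (Fin 2))) (hP : P.Nonempty) (hQ : Q.Nonempty)
    (hQP : Q ⊆ P) (hker : IsKernel ε P Q hP hQ) :
    ∀ p ∈ P, Metric.infDist p (convexHull ℝ (Q : Set (EuclideanSpace ℝ (Fin 2)))) ≤
      ε * fdiam P hP := by
  intro p hp
  set d := Metric.infDist p (convexHull ℝ (Q : Set (EuclideanSpace ℝ (Fin 2)))) with hd
  rcases (Metric.infDist_nonneg : 0 ≤ d).eq_or_lt with h0 | hpos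
  · rw [hd, ← h0]
    exact mul_nonneg hε0 (fdiam_nonneg hP)
  obtain ⟨u, hu, hsep⟩ := exists_unit_inner_le_sub_infDist
    (Q.finite_toSet.isCompact_convexHull (𝕜 := ℝ) |>.isComplete) (convex_convexHull ℝ _) hpos
  have hwidth : dirWidth Q hQ u ≤ dirWidth P hP u - d :=
    dirWidth_le_sub_of_subset hP hQ hQP hp fun q hq => hsep q (subset_convexHull ℝ _ hq)
  have hdiam : dirWidth P hP u ≤ fdiam P hP := by
    simpa [hu] using dirWidth_le_norm_mul_fdiam hP u
  calc d ≤ ε * dirWidth P hP u := by linarith [hker u hu]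
    _ ≤ ε * fdiam P hP := by gcongr

theorem kernel_is_hull
    (ε : ℝ) (hε0 : 0 ≤ ε) (hε1 : ε < 1)
    (P Q : Finset (EuclideanSpace ℝ (Fin 2))) (hP : P.Nonempty) (hQ : Q.Nonempty)
    (hQP : Q ⊆ P) (hker : IsKernel ε P Q hP hQ) :
    ∀ p ∈ P, Metric.infDist p (convexHull ℝ (Q : Set (EuclideanSpace ℝ (Fin 2)))) ≤
      ε * fdiam P hP :=
  kernel_is_hull_general ε hε0 P Q hP hQ hQP hker
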